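/- There exists a solvable MPP instance (G, R, x_I, x_G) such that no solution simultaneously attains the minimum total arrival time and the minimum maximum distance. -/

import Mathlib

/-!
Formalization of multi-robot path planning on graphs (MPP).

An MPP instance consists of a connected simple graph `G` on a vertex type `V`,
a finite set of robots (an index type `R`), and injective start/goal
configurations `xI xG : R → V`.  A scheduled path is a map `ℕ → V`.
-/

namespace MPPFormal

variable {V R : Type}

/-- The arrival time of a path `p` with goal `g`: the smallest time `t`
with `p t = g`. -/
noncomputable def arrivalTime (g : V) (p : ℕ → V) : ℕ := sInf {t | p t = g}

/-- A feasible scheduled path from `s` to `g` in the graph `G`: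
it starts at `s`, reaches `g` at some time, stays at `g` forever after the
first time it reaches `g`, and at every time step it either traverses an
edge of `G` or stays put. -/
def FeasiblePath (G : SimpleGraph V) (s g : V) (p : ℕ → V) : Prop :=
  p 0 = s ∧ (∃ t, p t = g) ∧ (∀ t, arrivalTime g p ≤ t → p t = g) ∧
    ∀ t, G.Adj (p t) (p (t + 1)) ∨ p t = p (t + 1)

/-- Two scheduled paths collide if they meet at the same vertex at the same
time, or if they swap along an edge head-on. -/
def Collide (p q : ℕ → V) : Prop :=
  (∃ t, p t = q t) ∨ ∃ t, p t = q (t + 1) ∧ p (t + 1) = q t ∧ p t ≠ p (t + 1)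

/-- The length of a scheduled path: the number of time steps at which it
actually moves. -/
noncomputable def pathLen (p : ℕ → V) : ℕ := Set.ncard {t | p t ≠ p (t + 1)}

/-- A solution to the MPP instance `(G, R, xI, xG)`: a family of pairwise
non-colliding feasible paths, one per robot. -/
def IsSolution (G : SimpleGraph V) (xI xG : R → V) (p : R → ℕ → V) : Prop :=
  (∀ i, FeasiblePath G (xI i) (xG i) (p i)) ∧
    Pairwise fun i j => ¬ Collide (p i) (p j)

/-- `(G, xI, xG)` together with the robot index type `R` forms an MPP
instance: the graph is connected and the start and goal configurations are
injective. -/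
def IsMPPInstance (G : SimpleGraph V) (xI xG : R → V) : Prop :=
  G.Connected ∧ Function.Injective xI ∧ Function.Injective xG

variable [Fintype R]

/-- Total arrival time of a solution. -/
noncomputable def totalTime (xG : R → V) (p : R → ℕ → V) : ℕ :=
  ∑ i, arrivalTime (xG i) (p i)

/-- Makespan (last arrival time) of a solution. -/
noncomputable def makespan (xG : R → V) (p : R → ℕ → V) : ℕ :=
  Finset.univ.sup fun i => arrivalTime (xG i) (p i)

/-- Total distance traveled in a solution. -/
noncomputable def totalDist (p : R → ℕ → V) : ℕ := ∑ i, pathLen (p i)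

/-- Maximum single-robot distance of a solution. -/
noncomputable def maxDist (p : R → ℕ → V) : ℕ :=
  Finset.univ.sup fun i => pathLen (p i)

/-- Minimum total arrival time over all solutions. -/
noncomputable def minTotalTime (G : SimpleGraph V) (xI xG : R → V) : ℕ :=
  sInf {c | ∃ p, IsSolution G xI xG p ∧ totalTime xG p = c}

/-- Minimum makespan over all solutions. -/
noncomputable def minMakespan (G : SimpleGraph V) (xI xG : R → V) : ℕ :=
  sInf {c | ∃ p, IsSolution G xI xG p ∧ makespan xG p = c}

/-- Minimum total distance over all solutions. -/
noncomputable def minTotalDist (G : SimpleGraph V) (xI xG : R → V) : ℕ :=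
  sInf {c | ∃ p, IsSolution G xI xG p ∧ totalDist p = c}

/-- Minimum maximum distance over all solutions. -/
noncomputable def minMaxDist (G : SimpleGraph V) (xI xG : R → V) : ℕ :=
  sInf {c | ∃ p, IsSolution G xI xG p ∧ maxDist p = c}

end MPPFormal

namespace MPPFormal

/-!
Vertices `0, 1, 2, 3` form a path, with a pendant vertex `4` at `2`, a pendant vertex `5` at `1`,
and a vertex `6` adjacent to `1` and `2`. Robot `0` travels `0 → 3` and robot `1` travels `4 → 5`;
each needs at least three moves, and their unique shortest routes cross the edge `1 — 2` in
opposite directions. A robot that arrives at time `3` is forced onto its shortest route, so the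
other robot, if it is to arrive by time `4`, must detour around the triangle `1, 2, 6` and move
four times. Thus total arrival time `7` is attained (with the detour) and maximum distance `3` is
attained (by waiting instead), but never both. The reflection `0 ↔ 4, 1 ↔ 2, 3 ↔ 5` is an
automorphism exchanging the two robots, so only the case where robot `0` arrives first needs work.
-/

open Finset Function

variable {V W : Type}

section Paths

variable {G : SimpleGraph V} {s g : V} {p q : ℕ → V}

theorem ne_of_lt_arrivalTime {t : ℕ} (h : t < arrivalTime g p) : p t ≠ g :=
  Nat.notMem_of_lt_sInf h

theorem arrivalTime_eq {T : ℕ} (hT : p T = g) (hlt : ∀ t < T, p t ≠ g) :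
    arrivalTime g p = T :=
  le_antisymm (Nat.sInf_le hT) (le_csInf ⟨T, hT⟩ fun t ht => not_lt.1 fun h => hlt t h ht)

theorem arrivalTime_comp {f : V → W} (hf : Injective f) (g : V) (p : ℕ → V) :
    arrivalTime (f g) (f ∘ p) = arrivalTime g p := by
  simp only [arrivalTime, comp_apply, hf.eq_iff]

theorem pathLen_comp {f : V → W} (hf : Injective f) (p : ℕ → V) :
    pathLen (f ∘ p) = pathLen p := by
  simp only [pathLen, comp_apply, hf.ne_iff]

def AdjOrEq (G : SimpleGraph V) (u v : V) : Prop :=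
  G.Adj u v ∨ u = v

instance [DecidableEq V] [DecidableRel G.Adj] : DecidableRel (AdjOrEq G) :=
  fun u v => inferInstanceAs (Decidable (G.Adj u v ∨ u = v))

namespace FeasiblePath

theorem start (hp : FeasiblePath G s g p) : p 0 = s :=
  hp.1

theorem arrives (hp : FeasiblePath G s g p) : p (arrivalTime g p) = g :=
  Nat.sInf_mem hp.2.1

theorem stays (hp : FeasiblePath G s g p) {t : ℕ} (ht : arrivalTime g p ≤ t) : p t = g :=
  hp.2.2.1 t ht

theorem step (hp : FeasiblePath G s g p) (t : ℕ) : AdjOrEq G (p t) (p (t + 1)) :=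
  hp.2.2.2 t

theorem map {G' : SimpleGraph W} (f : G ≃g G') (hp : FeasiblePath G s g p) :
    FeasiblePath G' (f s) (f g) (f ∘ p) := by
  obtain ⟨t, ht⟩ := hp.2.1
  refine ⟨congrArg f hp.start, ⟨t, congrArg f ht⟩, fun t ht => ?_, fun t => ?_⟩
  · rw [arrivalTime_comp f.injective] at ht
    exact congrArg f (hp.stays ht)
  · rcases hp.step t with hadj | heq
    · exact Or.inl (f.map_adj_iff.2 hadj)
    · exact Or.inr (congrArg f heq)

end FeasiblePath

section Moves

variable [DecidableEq V]

def moves (p : ℕ → V) (t : ℕ) : ℕ :=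
  #{u ∈ range t | p u ≠ p (u + 1)}

theorem moves_succ (p : ℕ → V) (t : ℕ) :
    moves p (t + 1) = moves p t + if p t ≠ p (t + 1) then 1 else 0 := by
  simp only [moves, card_filter, sum_range_succ]

theorem moves_mono (p : ℕ → V) : Monotone (moves p) :=
  fun _ _ h => card_le_card (filter_subset_filter _ (range_subset_range.2 h))

theorem moves_eq_self_iff {t : ℕ} : moves p t = t ↔ ∀ u < t, p u ≠ p (u + 1) := by
  simpa only [moves, card_range, mem_range] using card_filter_eq_iff (s := range t)

theorem pathLen_eq_moves {T : ℕ} (h : ∀ t, T ≤ t → p t = g) : pathLen p = moves p T := by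
  rw [pathLen, moves, ← Set.ncard_coe_finset]
  congr 1
  ext t
  simp only [Set.mem_ofPred_eq, coe_filter, mem_range]
  refine ⟨fun hne => ⟨not_le.1 fun ht => hne ?_, hne⟩, And.right⟩
  rw [h t ht, h (t + 1) (by omega)]

theorem moves_le_pathLen {T : ℕ} (h : ∀ t, T ≤ t → p t = g) (t : ℕ) :
    moves p t ≤ pathLen p :=
  (moves_mono p (t.le_add_right T)).trans_eq
    (pathLen_eq_moves fun u hu => h u (by omega)).symm

end Moves

theorem FeasiblePath.pathLen_le_arrivalTime (hp : FeasiblePath G s g p) :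
    pathLen p ≤ arrivalTime g p := by
  classical
  rw [pathLen_eq_moves fun _ => hp.stays]
  exact (card_filter_le _ _).trans_eq (card_range _)

theorem FeasiblePath.le_add_pathLen (hp : FeasiblePath G s g p) {φ : V → ℕ}
    (hφ : ∀ u v, G.Adj u v → φ v ≤ φ u + 1) : φ g ≤ φ s + pathLen p := by
  classical
  have hmoves : ∀ t, φ (p t) ≤ φ (p 0) + moves p t := by
    intro t
    induction t with
    | zero => simp [moves]
    | succ t ih =>
      rw [moves_succ]
      rcases hp.step t with hadj | heq
      · rw [if_pos hadj.ne]
        have := hφ _ _ hadj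
        omega
      · rw [if_neg (not_not.2 heq), ← heq]
        omega
  simpa only [hp.arrives, hp.start, ← pathLen_eq_moves fun _ => hp.stays] using hmoves (arrivalTime g p)

theorem Collide.symm (h : Collide p q) : Collide q p := by
  rcases h with ⟨t, ht⟩ | ⟨t, h1, h2, hne⟩
  · exact Or.inl ⟨t, ht.symm⟩
  · exact Or.inr ⟨t, h2.symm, h1.symm, fun h => hne (h1.trans (h.symm.trans h2.symm))⟩

theorem Collide.of_comp {f : V → W} (hf : Injective f) (h : Collide (f ∘ p) (f ∘ q)) :
    Collide p q := by
  simpa only [Collide, comp_apply, hf.eq_iff, hf.ne_iff] using h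

end Paths

section Routes

def route (l : List V) (g : V) (t : ℕ) : V :=
  l.getD t g

variable {G : SimpleGraph V} {l l' : List V} {s g g' : V}

theorem route_of_length_le {t : ℕ} (h : l.length ≤ t) : route l g t = g :=
  List.getD_eq_default _ _ h

theorem arrivalTime_route (hg : g ∉ l) : arrivalTime g (route l g) = l.length :=
  arrivalTime_eq (route_of_length_le le_rfl) fun t ht h =>
    hg (by rw [← h, route, List.getD_eq_getElem _ _ ht]; exact List.getElem_mem ht)

theorem pathLen_route [DecidableEq V] : pathLen (route l g) = moves (route l g) l.length :=
  pathLen_eq_moves fun _ => route_of_length_le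

theorem feasiblePath_route (hs : route l g 0 = s) (hg : g ∉ l)
    (hstep : ∀ t < l.length, AdjOrEq G (route l g t) (route l g (t + 1))) :
    FeasiblePath G s g (route l g) := by
  refine ⟨hs, ⟨_, route_of_length_le le_rfl⟩, fun t ht => ?_, fun t => ?_⟩
  · exact route_of_length_le (arrivalTime_route hg ▸ ht)
  · by_cases ht : t < l.length
    · exact hstep t ht
    · exact Or.inr (by rw [route_of_length_le (by omega), route_of_length_le (by omega)])

theorem not_collide_route (hg : g ≠ g') {T : ℕ} (hl : l.length ≤ T) (hl' : l'.length ≤ T)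
    (h : ∀ t < T, route l g t ≠ route l' g' t ∧
      ¬ (route l g t = route l' g' (t + 1) ∧ route l g (t + 1) = route l' g' t)) :
    ¬ Collide (route l g) (route l' g') := by
  rintro (⟨t, ht⟩ | ⟨t, h1, h2, hne⟩) <;> by_cases hT : t < T
  · exact (h t hT).1 ht
  · rw [route_of_length_le (by omega), route_of_length_le (by omega)] at ht
    exact hg ht
  · exact (h t hT).2 ⟨h1, h2⟩
  · rw [route_of_length_le (by omega), route_of_length_le (by omega)] at hne
    exact hne rfl

end Routes

section TwoRobots

variable {G : SimpleGraph V} {xI xG : Fin 2 → V} {p : Fin 2 → ℕ → V}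

theorem isSolution_fin_two_iff : IsSolution G xI xG p ↔
    FeasiblePath G (xI 0) (xG 0) (p 0) ∧ FeasiblePath G (xI 1) (xG 1) (p 1) ∧
      ¬ Collide (p 0) (p 1) := by
  refine ⟨fun hp => ⟨hp.1 0, hp.1 1, hp.2 (by decide)⟩, fun ⟨h0, h1, hc⟩ => ⟨?_, ?_⟩⟩
  · exact Fin.forall_fin_two.2 ⟨h0, h1⟩
  · intro i j hij
    fin_cases i <;> fin_cases j
    exacts [(hij rfl).elim, hc, fun h => hc h.symm, (hij rfl).elim]

theorem totalTime_fin_two :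
    totalTime xG p = arrivalTime (xG 0) (p 0) + arrivalTime (xG 1) (p 1) :=
  Fin.sum_univ_two _

theorem maxDist_fin_two : maxDist p = max (pathLen (p 0)) (pathLen (p 1)) := by
  simp [maxDist, Fin.univ_succ]

end TwoRobots

section Optima

variable {R : Type} [Fintype R] {G : SimpleGraph V} {xI xG : R → V} {p : R → ℕ → V} {c : ℕ}

theorem minTotalTime_eq (hp : IsSolution G xI xG p) (hc : totalTime xG p = c)
    (hmin : ∀ q, IsSolution G xI xG q → c ≤ totalTime xG q) : minTotalTime G xI xG = c :=
  IsLeast.csInf_eq ⟨⟨p, hp, hc⟩, by rintro _ ⟨q, hq, rfl⟩; exact hmin q hq⟩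

theorem minMaxDist_eq (hp : IsSolution G xI xG p) (hc : maxDist p = c)
    (hmin : ∀ q, IsSolution G xI xG q → c ≤ maxDist q) : minMaxDist G xI xG = c :=
  IsLeast.csInf_eq ⟨⟨p, hp, hc⟩, by rintro _ ⟨q, hq, rfl⟩; exact hmin q hq⟩

end Optima

section ParetoInstance

def paretoEdges : List (Fin 7 × Fin 7) :=
  [(0, 1), (1, 2), (2, 3), (2, 4), (1, 5), (1, 6), (2, 6)]

def paretoGraph : SimpleGraph (Fin 7) :=
  SimpleGraph.fromRel fun x y => (x, y) ∈ paretoEdges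

instance : DecidableRel paretoGraph.Adj :=
  inferInstanceAs (DecidableRel (SimpleGraph.fromRel _).Adj)

def paretoStart : Fin 2 → Fin 7 := ![0, 4]

def paretoGoal : Fin 2 → Fin 7 := ![3, 5]

def reflection : paretoGraph ≃g paretoGraph where
  toFun := ![4, 2, 1, 5, 0, 3, 6]
  invFun := ![4, 2, 1, 5, 0, 3, 6]
  left_inv := by decide
  right_inv := by decide
  map_rel_iff' := by decide

theorem isMPPInstance_pareto : IsMPPInstance paretoGraph paretoStart paretoGoal :=
  ⟨by decide, by decide, by decide⟩

variable {p a b : ℕ → Fin 7} {q : Fin 2 → ℕ → Fin 7}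

theorem three_le_pathLen (hp : FeasiblePath paretoGraph 0 3 p) : 3 ≤ pathLen p := by
  -- the potential is the graph distance from `0`
  simpa using hp.le_add_pathLen (φ := ![0, 1, 2, 3, 3, 2, 2]) (by decide)

theorem three_le_pathLen_of_isSolution (hq : IsSolution paretoGraph paretoStart paretoGoal q)
    (i : Fin 2) : 3 ≤ pathLen (q i) := by
  obtain ⟨h0, h1, -⟩ := isSolution_fin_two_iff.1 hq
  fin_cases i
  · exact three_le_pathLen h0
  · show 3 ≤ pathLen (q 1)
    rw [← pathLen_comp reflection.injective]
    exact three_le_pathLen (h1.map reflection)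

theorem three_le_arrivalTime_of_isSolution
    (hq : IsSolution paretoGraph paretoStart paretoGoal q) (i : Fin 2) :
    3 ≤ arrivalTime (paretoGoal i) (q i) :=
  (three_le_pathLen_of_isSolution hq i).trans (hq.1 i).pathLen_le_arrivalTime

theorem eq_one_two_of_arrivalTime_eq_three (hp : FeasiblePath paretoGraph 0 3 p)
    (harr : arrivalTime 3 p = 3) : p 1 = 1 ∧ p 2 = 2 := by
  have key : ∀ v₁ v₂ : Fin 7, AdjOrEq paretoGraph 0 v₁ → AdjOrEq paretoGraph v₁ v₂ →
      AdjOrEq paretoGraph v₂ 3 → v₂ ≠ 3 → v₁ = 1 ∧ v₂ = 2 := by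
    decide
  have h3 : p 3 = 3 := harr ▸ hp.arrives
  exact key _ _ (hp.start ▸ hp.step 0) (hp.step 1) (h3 ▸ hp.step 2)
    (ne_of_lt_arrivalTime (by omega))

theorem four_le_pathLen_of_not_collide (ha : FeasiblePath paretoGraph 0 3 a)
    (hb : FeasiblePath paretoGraph 4 5 b) (hab : ¬ Collide a b) (ha_arr : arrivalTime 3 a = 3)
    (hb_arr : arrivalTime 5 b ≤ 4) : 4 ≤ pathLen b := by
  obtain ⟨ha1, ha2⟩ := eq_one_two_of_arrivalTime_eq_three ha ha_arr
  have hb4 : b 4 = 5 := hb.stays hb_arr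
  have hmeet : b 2 ≠ 2 := fun h => hab (Or.inl ⟨2, ha2.trans h.symm⟩)
  have hswap : ¬ (b 1 = 2 ∧ b 2 = 1) := fun ⟨h1, h2⟩ =>
    hab (Or.inr ⟨1, by rw [ha1, h2], by rw [ha2, h1], by rw [ha1, ha2]; decide⟩)
  -- the only such route is the detour `4, 2, 6, 1, 5`
  have key : ∀ v₁ v₂ v₃ : Fin 7, AdjOrEq paretoGraph 4 v₁ → AdjOrEq paretoGraph v₁ v₂ →
      AdjOrEq paretoGraph v₂ v₃ → AdjOrEq paretoGraph v₃ 5 → v₂ ≠ 2 → ¬ (v₁ = 2 ∧ v₂ = 1) →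
      4 ≠ v₁ ∧ v₁ ≠ v₂ ∧ v₂ ≠ v₃ ∧ v₃ ≠ 5 := by
    set_option synthInstance.maxSize 2048 in decide
  obtain ⟨h0, h1, h2, h3⟩ := key _ _ _ (hb.start ▸ hb.step 0) (hb.step 1) (hb.step 2)
    (hb4 ▸ hb.step 3) hmeet hswap
  have hmoves : moves b 4 = 4 := by
    refine moves_eq_self_iff.2 fun u hu => ?_
    interval_cases u
    exacts [hb.start ▸ h0, h1, h2, hb4 ▸ h3]
  exact hmoves ▸ moves_le_pathLen (fun _ => hb.stays) 4

theorem four_le_maxDist_of_totalTime_le (hq : IsSolution paretoGraph paretoStart paretoGoal q)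
    (ht : totalTime paretoGoal q ≤ 7) : 4 ≤ maxDist q := by
  obtain ⟨h0, h1, hc⟩ := isSolution_fin_two_iff.1 hq
  replace h0 : FeasiblePath paretoGraph 0 3 (q 0) := h0
  replace h1 : FeasiblePath paretoGraph 4 5 (q 1) := h1
  replace ht : arrivalTime 3 (q 0) + arrivalTime 5 (q 1) ≤ 7 := by rwa [totalTime_fin_two] at ht
  have ha : 3 ≤ arrivalTime 3 (q 0) := three_le_arrivalTime_of_isSolution hq 0
  have hb : 3 ≤ arrivalTime 5 (q 1) := three_le_arrivalTime_of_isSolution hq 1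
  rw [maxDist_fin_two]
  by_cases ha3 : arrivalTime 3 (q 0) = 3
  · exact le_max_of_le_right (four_le_pathLen_of_not_collide h0 h1 hc ha3 (by omega))
  · refine le_max_of_le_left (le_of_le_of_eq ?_ (pathLen_comp reflection.injective (q 0)))
    refine four_le_pathLen_of_not_collide (h1.map reflection) (h0.map reflection)
      (fun h => hc (h.of_comp reflection.injective).symm) ?_ ?_
    · exact (arrivalTime_comp reflection.injective 5 (q 1)).trans (by omega)
    · exact (arrivalTime_comp reflection.injective 3 (q 0)).trans_le (by omega)

def detourSolution : Fin 2 → ℕ → Fin 7 :=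
  ![route [0, 1, 2] 3, route [4, 2, 6, 1] 5]

def waitingSolution : Fin 2 → ℕ → Fin 7 :=
  ![route [0, 1, 2] 3, route [4, 4, 4, 2, 1] 5]

theorem isSolution_detourSolution :
    IsSolution paretoGraph paretoStart paretoGoal detourSolution :=
  isSolution_fin_two_iff.2 ⟨feasiblePath_route rfl (by decide) (by decide),
    feasiblePath_route rfl (by decide) (by decide),
    not_collide_route (T := 4) (by decide) (by decide) (by decide) (by decide)⟩

theorem isSolution_waitingSolution :
    IsSolution paretoGraph paretoStart paretoGoal waitingSolution :=
  isSolution_fin_two_iff.2 ⟨feasiblePath_route rfl (by decide) (by decide),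
    feasiblePath_route rfl (by decide) (by decide),
    not_collide_route (T := 5) (by decide) (by decide) (by decide) (by decide)⟩

theorem seven_le_totalTime (hq : IsSolution paretoGraph paretoStart paretoGoal q) :
    7 ≤ totalTime paretoGoal q := by
  by_contra! ht
  have h4 := four_le_maxDist_of_totalTime_le hq ht.le
  rw [totalTime_fin_two] at ht
  rw [maxDist_fin_two] at h4
  have := (hq.1 0).pathLen_le_arrivalTime
  have := (hq.1 1).pathLen_le_arrivalTime
  have := three_le_arrivalTime_of_isSolution hq 0
  have := three_le_arrivalTime_of_isSolution hq 1
  omega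

theorem minTotalTime_pareto : minTotalTime paretoGraph paretoStart paretoGoal = 7 := by
  refine minTotalTime_eq isSolution_detourSolution ?_ fun q => seven_le_totalTime
  rw [totalTime_fin_two]
  exact congrArg₂ (· + ·) (arrivalTime_route (by decide)) (arrivalTime_route (by decide))

theorem minMaxDist_pareto : minMaxDist paretoGraph paretoStart paretoGoal = 3 := by
  refine minMaxDist_eq isSolution_waitingSolution ?_ fun q hq =>
    (three_le_pathLen_of_isSolution hq 0).trans (maxDist_fin_two ▸ le_max_left _ _)
  rw [maxDist_fin_two]
  show max (pathLen (route [0, 1, 2] (3 : Fin 7)))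
    (pathLen (route [4, 4, 4, 2, 1] (5 : Fin 7))) = 3
  rw [pathLen_route, pathLen_route]
  decide

end ParetoInstance

/-- There exists a solvable MPP instance such that no solution simultaneously
attains the minimum total arrival time and the minimum maximum distance. -/
theorem pareto_totalTime_maxDist :
    ∃ (k : ℕ) (V : Type) (G : SimpleGraph V) (xI xG : Fin k → V),
      IsMPPInstance G xI xG ∧ (∃ p, IsSolution G xI xG p) ∧
      ¬ ∃ p, IsSolution G xI xG p ∧ totalTime xG p = minTotalTime G xI xG ∧
        maxDist p = minMaxDist G xI xG := by
  refine ⟨2, Fin 7, paretoGraph, paretoStart, paretoGoal, isMPPInstance_pareto,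
    ⟨_, isSolution_detourSolution⟩, ?_⟩
  rintro ⟨p, hp, htime, hdist⟩
  rw [minTotalTime_pareto] at htime
  rw [minMaxDist_pareto] at hdist
  have := four_le_maxDist_of_totalTime_le hp htime.le
  omega

end MPPFormal
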